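/- arXiv:2205.02196 — 4 statements merged into one kernel-verified Lean document; each statement's English description precedes it below -/
import Mathlib

section
/- For n ≥ 3, a partial transformation α on {1,...,n} is a partial isometry of the cycle graph C_n if and only if α is a restriction of some element of the dihedral group D_{2n} generated by the n-cycle g (i·g = i+1 mod n) and the reversal h (i·h = n-i+1). -/
/-!
Identify `{1,...,n}` with `ZMod n` through the natural cast. The cycle distance is then the
absolute value `|x - y|` in `ZMod n` (`ZMod.valMinAbs`), so `d(x', y') = d(x, y)` exactly when
`x' - y' = ±(x - y)`. In any abelian group, a map preserving all differences up to sign is a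
translation `x ↦ x + c` or a reflection `x ↦ c - x`: once one pair `a, b` is reflected, comparing
any further point with both `a` and `b` shows that it is reflected too. On `ZMod n` the dihedral
elements `g^k` and `h·g^k` act as `x ↦ x + k` and `x ↦ (1 + k) - x`, which are all of these maps.
-/

/-- Geodesic distance on the cycle graph `C_n` with vertices `{1,...,n}`:
`d(x,y) = min (|x-y|, n-|x-y|)`. -/
def cdist (n x y : ℕ) : ℕ := min ((x : ℤ) - y).natAbs (n - ((x : ℤ) - y).natAbs)

/-- The n-cycle permutation `g` of `{1,...,n}`: `i ↦ i+1 (mod n)`. -/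
def gfun (n i : ℕ) : ℕ := if i < n then i + 1 else 1

/-- The reversal permutation `h` of `{1,...,n}`: `i ↦ n-i+1`. -/
def hfun (n i : ℕ) : ℕ := n - i + 1

/-- Left-to-right composition of partial maps (apply `f`, then `g`). -/
def pcomp (f g : ℕ → Option ℕ) : ℕ → Option ℕ := fun x => (f x).bind g

/-- The partial identity on `{1,...,n}`. -/
def pid (n : ℕ) : ℕ → Option ℕ := fun i => if i ∈ Finset.Icc 1 n then some i else none

/-- `g` as a partial map with domain `{1,...,n}`. -/
def gmap (n : ℕ) : ℕ → Option ℕ := fun i => if i ∈ Finset.Icc 1 n then some (gfun n i) else none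

/-- `h` as a partial map with domain `{1,...,n}`. -/
def hmap (n : ℕ) : ℕ → Option ℕ := fun i => if i ∈ Finset.Icc 1 n then some (hfun n i) else none

/-- `e_j`: the partial identity with domain `{1,...,n} \ {j}`. -/
def emap (n j : ℕ) : ℕ → Option ℕ := fun i => if i ∈ Finset.Icc 1 n ∧ i ≠ j then some i else none

/-- `k`-th power of a partial map (with identity `pid n`). -/
def ppow (n : ℕ) (f : ℕ → Option ℕ) : ℕ → (ℕ → Option ℕ)
  | 0 => pid n
  | k + 1 => pcomp f (ppow n f k)

/-- `f` is a partial isometry of the cycle graph `C_n`: a partial injective map on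
`{1,...,n}` preserving the cycle distance. -/
def PIso (n : ℕ) (f : ℕ → Option ℕ) : Prop :=
  (∀ x y, f x = some y → x ∈ Finset.Icc 1 n ∧ y ∈ Finset.Icc 1 n) ∧
  (∀ x y z, f x = some z → f y = some z → x = y) ∧
  (∀ x y x' y', f x = some x' → f y = some y' → cdist n x' y' = cdist n x y)

/-- Domain of a partial map, as a set. -/
def DomS (f : ℕ → Option ℕ) : Set ℕ := {x | (f x).isSome}

/-- Image of a partial map, as a set. -/
def ImS (f : ℕ → Option ℕ) : Set ℕ := {y | ∃ x, f x = some y}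

/-- Domain of a partial map on `{1,...,n}`, as a finset. -/
def domF (n : ℕ) (f : ℕ → Option ℕ) : Finset ℕ :=
  (Finset.Icc 1 n).filter (fun x => (f x).isSome)

/-- The dihedral group `D_{2n}` as the set of the permutations `g^k` and `h·g^k`
(acting on the right, so `h·g^k` applies `h` first) of `{1,...,n}`, `0 ≤ k ≤ n-1`. -/
def Dih (n : ℕ) : Set (ℕ → ℕ) :=
  {σ | ∃ k < n, σ = (gfun n)^[k] ∨ σ = fun i => (gfun n)^[k] (hfun n i)}

/-- `σ` extends the partial map `f`. -/
def Extends (σ : ℕ → ℕ) (f : ℕ → Option ℕ) : Prop := ∀ x y, f x = some y → σ x = y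

theorem AddCommGroup.exists_eq_add_or_eq_sub_of_sub_eq_or_sub_eq {G ι : Type*} [AddCommGroup G]
    (p q : ι → G) (h : ∀ i j, q i - q j = p i - p j ∨ q i - q j = p j - p i) :
    ∃ c, (∀ i, q i = p i + c) ∨ ∀ i, q i = c - p i := by
  rcases isEmpty_or_nonempty ι with hι | ⟨⟨a⟩⟩
  · exact ⟨0, Or.inl hι.elim⟩
  by_cases htrans : ∀ i, q i - q a = p i - p a
  · exact ⟨q a - p a, Or.inl fun i => by linear_combination (norm := abel) htrans i⟩
  push Not at htrans
  obtain ⟨b, hb⟩ := htrans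
  have hba : q b - q a = p a - p b := (h b a).resolve_left hb
  refine ⟨q a + p a, Or.inr fun i => ?_⟩
  suffices q i - q a = p a - p i by linear_combination (norm := abel) this
  rcases h i b with hib | hib
  · refine (h i a).resolve_left fun hia => hb ?_
    linear_combination (norm := abel) hia - hib
  · linear_combination (norm := abel) hib + hba

section CycleGraph

variable {n : ℕ}

theorem cdist_comm (x y : ℕ) : cdist n x y = cdist n y x := by
  unfold cdist
  rw [← Int.natAbs_neg, neg_sub]

theorem cdist_eq_natAbs_valMinAbs [NeZero n] {x y : ℕ} (hx : x ∈ Finset.Icc 1 n)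
    (hy : y ∈ Finset.Icc 1 n) : cdist n x y = ((x : ZMod n) - y).valMinAbs.natAbs := by
  wlog hyx : y ≤ x generalizing x y
  · rw [cdist_comm, this hy hx (by omega), ← ZMod.natAbs_valMinAbs_neg, neg_sub]
  simp only [Finset.mem_Icc] at hx hy
  rw [ZMod.valMinAbs_natAbs_eq_min, ← Nat.cast_sub hyx, ZMod.val_natCast,
    Nat.mod_eq_of_lt (by omega)]
  unfold cdist
  omega

theorem cdist_eq_cdist_iff [NeZero n] {x y x' y' : ℕ} (hx : x ∈ Finset.Icc 1 n)
    (hy : y ∈ Finset.Icc 1 n) (hx' : x' ∈ Finset.Icc 1 n) (hy' : y' ∈ Finset.Icc 1 n) :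
    cdist n x' y' = cdist n x y ↔
      (x' : ZMod n) - y' = x - y ∨ (x' : ZMod n) - y' = y - x := by
  rw [cdist_eq_natAbs_valMinAbs hx hy, cdist_eq_natAbs_valMinAbs hx' hy',
    ZMod.natAbs_valMinAbs_eq_natAbs_valMinAbs, neg_sub]

theorem natCast_injOn_Icc : Set.InjOn (Nat.cast : ℕ → ZMod n) (Finset.Icc 1 n) := by
  intro x hx y hy hxy
  simp only [Finset.coe_Icc, Set.mem_Icc] at hx hy
  rw [ZMod.natCast_eq_natCast_iff'] at hxy
  have hmod : ∀ z, 1 ≤ z → z ≤ n → z % n = if z = n then 0 else z := by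
    intro z hz1 hzn
    split_ifs with hz
    · rw [hz, Nat.mod_self]
    · exact Nat.mod_eq_of_lt (by omega)
  rw [hmod x hx.1 hx.2, hmod y hy.1 hy.2] at hxy
  split_ifs at hxy <;> omega

theorem gfun_mapsTo : Set.MapsTo (gfun n) (Finset.Icc 1 n) (Finset.Icc 1 n) := by
  intro x hx
  simp only [Finset.coe_Icc, Set.mem_Icc, gfun] at hx ⊢
  split_ifs <;> omega

theorem natCast_gfun {x : ℕ} (hx : x ∈ Finset.Icc 1 n) : (gfun n x : ZMod n) = x + 1 := by
  simp only [Finset.mem_Icc] at hx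
  unfold gfun
  split_ifs with hxn
  · push_cast; rfl
  · rw [show x = n by omega, ZMod.natCast_self, zero_add, Nat.cast_one]

theorem natCast_gfun_iterate (k : ℕ) {x : ℕ} (hx : x ∈ Finset.Icc 1 n) :
    ((gfun n)^[k] x : ZMod n) = x + k := by
  induction k with
  | zero => simp
  | succ k ih =>
    rw [Function.iterate_succ_apply', natCast_gfun (gfun_mapsTo.iterate k hx), ih]
    push_cast
    ring

theorem hfun_mapsTo : Set.MapsTo (hfun n) (Finset.Icc 1 n) (Finset.Icc 1 n) := by
  intro x hx
  simp only [Finset.coe_Icc, Set.mem_Icc, hfun] at hx ⊢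
  omega

theorem natCast_hfun {x : ℕ} (hx : x ∈ Finset.Icc 1 n) : (hfun n x : ZMod n) = 1 - x := by
  simp only [Finset.mem_Icc] at hx
  rw [hfun, Nat.cast_add, Nat.cast_sub hx.2, ZMod.natCast_self]
  ring

end CycleGraph

section Dihedral

variable {n : ℕ} {σ : ℕ → ℕ} {f : ℕ → Option ℕ}

theorem Dih.mapsTo (hσ : σ ∈ Dih n) : Set.MapsTo σ (Finset.Icc 1 n) (Finset.Icc 1 n) := by
  obtain ⟨k, -, rfl | rfl⟩ := hσ
  · exact gfun_mapsTo.iterate k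
  · exact (gfun_mapsTo.iterate k).comp hfun_mapsTo

theorem Dih.natCast_sub_natCast (hσ : σ ∈ Dih n) {x y : ℕ} (hx : x ∈ Finset.Icc 1 n)
    (hy : y ∈ Finset.Icc 1 n) :
    (σ x : ZMod n) - σ y = x - y ∨ (σ x : ZMod n) - σ y = y - x := by
  obtain ⟨k, -, rfl | rfl⟩ := hσ
  · left
    rw [natCast_gfun_iterate k hx, natCast_gfun_iterate k hy]
    ring
  · right
    rw [natCast_gfun_iterate k (hfun_mapsTo hx), natCast_gfun_iterate k (hfun_mapsTo hy),
      natCast_hfun hx, natCast_hfun hy]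
    ring

theorem exists_mem_dih_natCast_eq_add [NeZero n] (c : ZMod n) :
    ∃ σ ∈ Dih n, ∀ x ∈ Finset.Icc 1 n, (σ x : ZMod n) = x + c :=
  ⟨(gfun n)^[c.val], ⟨c.val, c.val_lt, Or.inl rfl⟩, fun x hx => by
    rw [natCast_gfun_iterate _ hx, ZMod.natCast_zmod_val]⟩

theorem exists_mem_dih_natCast_eq_sub [NeZero n] (c : ZMod n) :
    ∃ σ ∈ Dih n, ∀ x ∈ Finset.Icc 1 n, (σ x : ZMod n) = c - x :=
  ⟨fun i => (gfun n)^[(c - 1).val] (hfun n i), ⟨(c - 1).val, ZMod.val_lt _, Or.inr rfl⟩,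
    fun x hx => by
      rw [natCast_gfun_iterate _ (hfun_mapsTo hx), natCast_hfun hx, ZMod.natCast_zmod_val]
      ring⟩

theorem extends_of_natCast_eq (hf : ∀ x y, f x = some y → x ∈ Finset.Icc 1 n ∧ y ∈ Finset.Icc 1 n)
    (hσ : σ ∈ Dih n) (h : ∀ x y, f x = some y → (σ x : ZMod n) = y) : Extends σ f :=
  fun x y hxy => natCast_injOn_Icc (Dih.mapsTo hσ (hf x y hxy).1) (hf x y hxy).2 (h x y hxy)

theorem PIso.exists_natCast_eq_add_or_eq_sub [NeZero n] (hf : PIso n f) :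
    ∃ c : ZMod n, (∀ x y, f x = some y → (y : ZMod n) = x + c) ∨
      ∀ x y, f x = some y → (y : ZMod n) = c - x := by
  obtain ⟨hmem, -, hdist⟩ := hf
  obtain ⟨c, hc⟩ := AddCommGroup.exists_eq_add_or_eq_sub_of_sub_eq_or_sub_eq
    (ι := {p : ℕ × ℕ // f p.1 = some p.2}) (fun i => (i.1.1 : ZMod n)) (fun i => (i.1.2 : ZMod n))
    fun i j => (cdist_eq_cdist_iff (hmem _ _ i.2).1 (hmem _ _ j.2).1 (hmem _ _ i.2).2
      (hmem _ _ j.2).2).1 (hdist _ _ _ _ i.2 j.2)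
  exact ⟨c, hc.imp (fun h x y hxy => h ⟨(x, y), hxy⟩) (fun h x y hxy => h ⟨(x, y), hxy⟩)⟩

theorem piso_of_extends [NeZero n] (hdom : ∀ x y, f x = some y → x ∈ Finset.Icc 1 n)
    (hσ : σ ∈ Dih n) (hext : Extends σ f) : PIso n f := by
  have hmem : ∀ x y, f x = some y → x ∈ Finset.Icc 1 n ∧ y ∈ Finset.Icc 1 n :=
    fun x y hxy => ⟨hdom x y hxy, hext x y hxy ▸ Dih.mapsTo hσ (hdom x y hxy)⟩
  refine ⟨hmem, fun x y z hx hy => ?_, fun x y x' y' hx hy => ?_⟩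
  · refine natCast_injOn_Icc (hdom x z hx) (hdom y z hy) ?_
    rcases Dih.natCast_sub_natCast hσ (hdom x z hx) (hdom y z hy) with h | h <;>
      rw [hext x z hx, hext y z hy, sub_self] at h
    · exact sub_eq_zero.1 h.symm
    · exact (sub_eq_zero.1 h.symm).symm
  · rw [cdist_eq_cdist_iff (hdom x x' hx) (hdom y y' hy) (hmem x x' hx).2 (hmem y y' hy).2,
      ← hext x x' hx, ← hext y y' hy]
    exact Dih.natCast_sub_natCast hσ (hdom x x' hx) (hdom y y' hy)

end Dihedral

/-- a partial transformation of `{1,...,n}` is a partial isometry of `C_n`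
iff it is a restriction of an element of the dihedral group `D_{2n}`. -/
theorem stmt_6 (n : ℕ) (hn : 3 ≤ n) (f : ℕ → Option ℕ)
    (hdom : ∀ x y, f x = some y → x ∈ Finset.Icc 1 n) :
    PIso n f ↔ ∃ σ ∈ Dih n, Extends σ f := by
  have : NeZero n := ⟨by omega⟩
  refine ⟨fun hf => ?_, fun ⟨σ, hσ, hext⟩ => piso_of_extends hdom hσ hext⟩
  obtain ⟨c, hc | hc⟩ := hf.exists_natCast_eq_add_or_eq_sub
  · obtain ⟨σ, hσ, hσc⟩ := exists_mem_dih_natCast_eq_add c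
    exact ⟨σ, hσ, extends_of_natCast_eq hf.1 hσ fun x y hxy =>
      (hσc x (hf.1 x y hxy).1).trans (hc x y hxy).symm⟩
  · obtain ⟨σ, hσ, hσc⟩ := exists_mem_dih_natCast_eq_sub c
    exact ⟨σ, hσ, extends_of_natCast_eq hf.1 hσ fun x y hxy =>
      (hσc x (hf.1 x y hxy).1).trans (hc x y hxy).symm⟩
end

section
/- Let n ≥ 3 and let α be a partial isometry of the cycle graph C_n. If |Dom(α)| = 2 with d(min Dom(α), max Dom(α)) ≠ n/2, or |Dom(α)| ≥ 3, then there exists exactly one permutation σ in the dihedral group D_{2n} with σ restricted to Dom(α) equal to α. -/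
/-!
Read modulo `n`, each element of `D_{2n}` acts on `{1,...,n}` as an affine map `i ↦ ε * i + m`
with `ε = ±1`, and every such map arises. Equal cycle distances mean that the differences agree
up to sign modulo `n`. Take two points `a, b` of the domain with `2 * (a - b) ≠ 0` modulo `n`
(a non-antipodal pair; among three points one always exists, since a point has only one antipode).
Then the sign `ε` with `α a - α b = ε * (a - b)` is unique, and comparing with `a` and `b` forces
`α x - α a = ε * (x - a)` on the whole domain. So `α` is the restriction of an affine map of sign
`ε`, and an affine map of sign `±1` is determined by its values at `a` and `b`.
-/

open Finset

section Affine

variable {R : Type*} [CommRing R]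

lemma sub_eq_mul_sub_of_sub_eq_or_eq_neg {a b x a' b' x' ε : R} (hab : 2 * (a - b) ≠ 0)
    (hε : ε = 1 ∨ ε = -1) (h : a' - b' = ε * (a - b))
    (hxa : x' - a' = x - a ∨ x' - a' = -(x - a)) (hxb : x' - b' = x - b ∨ x' - b' = -(x - b)) :
    x' - a' = ε * (x - a) := by
  -- If the signs at `a` and `b` differ, then either `2 * (x - a) = 0`, so the sign at `a` does not
  -- matter, or `2 * (a - b) = 0`.
  rcases hε with rfl | rfl <;> rcases hxa with hxa | hxa <;> rcases hxb with hxb | hxb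
  all_goals first
    | linear_combination hxa
    | linear_combination hxb - h
    | linear_combination hxb + h
    | exact absurd (by linear_combination h + hxa - hxb) hab
    | exact absurd (by linear_combination -h - hxa + hxb) hab

lemma sign_eq_and_eq_of_mul_add_eq {a b ε η m m' : R} (hab : 2 * (a - b) ≠ 0)
    (hε : ε = 1 ∨ ε = -1) (hη : η = 1 ∨ η = -1)
    (ha : ε * a + m = η * a + m') (hb : ε * b + m = η * b + m') : ε = η ∧ m = m' := by
  have hεη : ε = η := by
    rcases hε with rfl | rfl <;> rcases hη with rfl | rfl
    all_goals first
      | rfl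
      | exact absurd (by linear_combination ha - hb) hab
      | exact absurd (by linear_combination hb - ha) hab
  subst hεη
  exact ⟨rfl, by linear_combination ha⟩

end Affine

lemma Int.eq_neg_or_eq_zero_or_eq_of_dvd {n m : ℤ} (h : n ∣ m) (hm : |m| < 2 * n) :
    m = -n ∨ m = 0 ∨ m = n := by
  obtain ⟨k, rfl⟩ := h
  have hn : 0 < n := by by_contra! hn; nlinarith [abs_nonneg (n * k)]
  rw [abs_lt] at hm
  have hk : -1 ≤ k ∧ k ≤ 1 := by constructor <;> nlinarith
  obtain ⟨hk1, hk2⟩ := hk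
  interval_cases k <;> simp

lemma eq_of_mem_Icc_of_natCast_eq {n x y : ℕ} (hx : x ∈ Icc 1 n) (hy : y ∈ Icc 1 n)
    (h : (x : ZMod n) = y) : x = y := by
  rw [mem_Icc] at hx hy
  rw [← Int.cast_natCast, ← Int.cast_natCast (R := ZMod n) y,
    ZMod.intCast_eq_intCast_iff_dvd_sub] at h
  have := Int.eq_zero_of_abs_lt_dvd h (by rw [abs_lt]; omega)
  omega

lemma ZMod.intCast_eq_of_sub_eq_zero_or_eq_or_eq_neg {n : ℕ} {u v : ℤ}
    (h : u - v = 0 ∨ u - v = n ∨ u - v = -n) :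
    (u : ZMod n) = v := by
  rw [eq_comm, ZMod.intCast_eq_intCast_iff_dvd_sub]
  rcases h with h | h | h <;> simp [h]

lemma natCast_sub_eq_or_eq_neg_of_cdist_eq {n x y z w : ℕ} (hx : x ∈ Icc 1 n)
    (hy : y ∈ Icc 1 n) (hz : z ∈ Icc 1 n) (hw : w ∈ Icc 1 n) (h : cdist n x y = cdist n z w) :
    (x : ZMod n) - y = z - w ∨ (x : ZMod n) - y = -(z - w) := by
  rw [mem_Icc] at hx hy hz hw
  unfold cdist at h
  have key : (((x : ℤ) - y) - (z - w) = 0 ∨ ((x : ℤ) - y) - (z - w) = n ∨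
      ((x : ℤ) - y) - (z - w) = -n) ∨ (((x : ℤ) - y) - -(z - w) = 0 ∨
      ((x : ℤ) - y) - -(z - w) = n ∨ ((x : ℤ) - y) - -(z - w) = -n) := by
    omega
  rcases key with h | h
  · left; exact_mod_cast ZMod.intCast_eq_of_sub_eq_zero_or_eq_or_eq_neg h
  · right; exact_mod_cast ZMod.intCast_eq_of_sub_eq_zero_or_eq_or_eq_neg h

lemma two_mul_natCast_sub_ne_zero {n a b : ℕ} (ha : a ∈ Icc 1 n) (hb : b ∈ Icc 1 n)
    (hab : a ≠ b) (hd : 2 * cdist n a b ≠ n) : 2 * ((a : ZMod n) - b) ≠ 0 := by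
  rw [mem_Icc] at ha hb
  intro h
  have hdvd : (n : ℤ) ∣ 2 * ((a : ℤ) - b) := by
    rw [← ZMod.intCast_zmod_eq_zero_iff_dvd]; push_cast; exact h
  have := Int.eq_neg_or_eq_zero_or_eq_of_dvd hdvd (by rw [abs_lt]; omega)
  unfold cdist at hd
  omega

lemma exists_pair_of_three_le_card {n : ℕ} {s : Finset ℕ} (hs : s ⊆ Icc 1 n)
    (h : 3 ≤ s.card) : ∃ a ∈ s, ∃ b ∈ s, a ≠ b ∧ 2 * cdist n a b ≠ n := by
  obtain ⟨a, b, c, ha, hb, hc, hab, hac, hbc⟩ := two_lt_card_iff.mp h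
  by_cases hab' : 2 * cdist n a b = n
  · refine ⟨a, ha, c, hc, hac, fun hac' => hbc ?_⟩
    have := mem_Icc.mp (hs hb)
    have := mem_Icc.mp (hs hc)
    unfold cdist at hab' hac'
    omega
  · exact ⟨a, ha, b, hb, hab, hab'⟩

lemma gfun_mem_Icc_and_natCast {n i : ℕ} (hi : i ∈ Icc 1 n) :
    gfun n i ∈ Icc 1 n ∧ (gfun n i : ZMod n) = i + 1 := by
  rw [mem_Icc] at hi ⊢
  unfold gfun
  split_ifs with h
  · exact ⟨by omega, by push_cast; rfl⟩
  · obtain rfl : i = n := by omega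
    exact ⟨⟨le_rfl, hi.1⟩, by simp⟩

lemma iterate_gfun_mem_Icc_and_natCast {n i : ℕ} (k : ℕ) (hi : i ∈ Icc 1 n) :
    (gfun n)^[k] i ∈ Icc 1 n ∧ ((gfun n)^[k] i : ZMod n) = i + k := by
  induction k with
  | zero => simpa using hi
  | succ k ih =>
    obtain ⟨hmem, hcast⟩ := gfun_mem_Icc_and_natCast ih.1
    rw [Function.iterate_succ_apply']
    exact ⟨hmem, by rw [hcast, ih.2]; push_cast; ring⟩

lemma hfun_mem_Icc_and_natCast {n i : ℕ} (hi : i ∈ Icc 1 n) :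
    hfun n i ∈ Icc 1 n ∧ (hfun n i : ZMod n) = 1 - i := by
  rw [mem_Icc] at hi ⊢
  unfold hfun
  refine ⟨by omega, ?_⟩
  rw [Nat.cast_add, Nat.cast_sub hi.2, ZMod.natCast_self]
  ring

def IsAffineOn (n : ℕ) (σ : ℕ → ℕ) (ε m : ZMod n) : Prop :=
  ∀ i ∈ Icc 1 n, σ i ∈ Icc 1 n ∧ (σ i : ZMod n) = ε * i + m

lemma exists_isAffineOn_of_mem_dih {n : ℕ} {σ : ℕ → ℕ} (hσ : σ ∈ Dih n) :
    ∃ ε m : ZMod n, (ε = 1 ∨ ε = -1) ∧ IsAffineOn n σ ε m := by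
  obtain ⟨k, -, rfl | rfl⟩ := hσ
  · refine ⟨1, k, .inl rfl, fun i hi => ?_⟩
    obtain ⟨hmem, hcast⟩ := iterate_gfun_mem_Icc_and_natCast k hi
    exact ⟨hmem, by rw [hcast, one_mul]⟩
  · refine ⟨-1, 1 + k, .inr rfl, fun i hi => ?_⟩
    obtain ⟨hmem, hcast⟩ := hfun_mem_Icc_and_natCast hi
    obtain ⟨hmem', hcast'⟩ := iterate_gfun_mem_Icc_and_natCast k hmem
    exact ⟨hmem', by rw [hcast', hcast]; ring⟩

lemma exists_mem_dih_isAffineOn {n : ℕ} [NeZero n] {ε : ZMod n} (hε : ε = 1 ∨ ε = -1)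
    (m : ZMod n) : ∃ σ ∈ Dih n, IsAffineOn n σ ε m := by
  rcases hε with rfl | rfl
  · refine ⟨(gfun n)^[m.val], ⟨m.val, m.val_lt, .inl rfl⟩, fun i hi => ?_⟩
    obtain ⟨hmem, hcast⟩ := iterate_gfun_mem_Icc_and_natCast m.val hi
    exact ⟨hmem, by rw [hcast, ZMod.natCast_zmod_val]; ring⟩
  · refine ⟨fun i => (gfun n)^[(m - 1).val] (hfun n i), ⟨(m - 1).val, (m - 1).val_lt, .inr rfl⟩,
      fun i hi => ?_⟩
    obtain ⟨hmem, hcast⟩ := hfun_mem_Icc_and_natCast hi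
    obtain ⟨hmem', hcast'⟩ := iterate_gfun_mem_Icc_and_natCast (m - 1).val hmem
    exact ⟨hmem', by rw [hcast', hcast, ZMod.natCast_zmod_val]; ring⟩

lemma IsAffineOn.eqOn {n : ℕ} {σ τ : ℕ → ℕ} {ε η m m' : ZMod n} (hσ : IsAffineOn n σ ε m)
    (hτ : IsAffineOn n τ η m') (hε : ε = 1 ∨ ε = -1) (hη : η = 1 ∨ η = -1) {a b : ℕ}
    (ha : a ∈ Icc 1 n) (hb : b ∈ Icc 1 n) (hab : 2 * ((a : ZMod n) - b) ≠ 0)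
    (hστa : σ a = τ a) (hστb : σ b = τ b) : ∀ x ∈ Icc 1 n, σ x = τ x := by
  have hcast : ∀ x ∈ Icc 1 n, σ x = τ x → ε * x + m = η * x + m' := fun x hx h => by
    rw [← (hσ x hx).2, ← (hτ x hx).2, h]
  obtain ⟨rfl, rfl⟩ := sign_eq_and_eq_of_mul_add_eq hab hε hη (hcast a ha hστa) (hcast b hb hστb)
  intro x hx
  exact eq_of_mem_Icc_of_natCast_eq (hσ x hx).1 (hτ x hx).1 (by rw [(hσ x hx).2, (hτ x hx).2])

lemma PIso.exists_affine {n : ℕ} {f : ℕ → Option ℕ} (hf : PIso n f) {a b a' b' : ℕ}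
    (ha : f a = some a') (hb : f b = some b') (hab : 2 * ((a : ZMod n) - b) ≠ 0) :
    ∃ ε m : ZMod n, (ε = 1 ∨ ε = -1) ∧ ∀ x x', f x = some x' → (x' : ZMod n) = ε * x + m := by
  have hsub : ∀ {x y x' y'}, f x = some x' → f y = some y' →
      (x' : ZMod n) - y' = x - y ∨ (x' : ZMod n) - y' = -(x - y) := fun hx hy =>
    natCast_sub_eq_or_eq_neg_of_cdist_eq (hf.1 _ _ hx).2 (hf.1 _ _ hy).2 (hf.1 _ _ hx).1
      (hf.1 _ _ hy).1 (hf.2.2 _ _ _ _ hx hy)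
  obtain ⟨ε, hε, habε⟩ : ∃ ε : ZMod n, (ε = 1 ∨ ε = -1) ∧ (a' : ZMod n) - b' = ε * (a - b) := by
    rcases hsub ha hb with h | h
    exacts [⟨1, .inl rfl, by rw [h, one_mul]⟩, ⟨-1, .inr rfl, by rw [h, neg_one_mul]⟩]
  refine ⟨ε, a' - ε * a, hε, fun x x' hx => ?_⟩
  linear_combination sub_eq_mul_sub_of_sub_eq_or_eq_neg hab hε habε (hsub hx ha) (hsub hx hb)

/-- a partial isometry of `C_n` whose domain is a pair at distance `≠ n/2`,
or has at least three elements, has exactly one extension in `D_{2n}` (uniqueness as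
permutations of `{1,...,n}`). -/
theorem stmt_8 (n : ℕ) (hn : 3 ≤ n) (f : ℕ → Option ℕ) (hf : PIso n f)
    (hd : (∃ i j, i < j ∧ domF n f = {i, j} ∧ 2 * cdist n i j ≠ n) ∨
      3 ≤ (domF n f).card) :
    ∃ σ ∈ Dih n, Extends σ f ∧
      ∀ τ ∈ Dih n, Extends τ f → ∀ x ∈ Finset.Icc 1 n, τ x = σ x := by
  have : NeZero n := ⟨by omega⟩
  obtain ⟨a, ha, b, hb, hab, habd⟩ :
      ∃ a ∈ domF n f, ∃ b ∈ domF n f, a ≠ b ∧ 2 * cdist n a b ≠ n := by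
    rcases hd with ⟨i, j, hij, hdom, hijd⟩ | hcard
    · exact ⟨i, by simp [hdom], j, by simp [hdom], hij.ne, hijd⟩
    · exact exists_pair_of_three_le_card (filter_subset _ _) hcard
  obtain ⟨a', hfa⟩ := Option.isSome_iff_exists.mp (mem_filter.mp ha).2
  obtain ⟨b', hfb⟩ := Option.isSome_iff_exists.mp (mem_filter.mp hb).2
  have hab' := two_mul_natCast_sub_ne_zero (hf.1 a a' hfa).1 (hf.1 b b' hfb).1 hab habd
  obtain ⟨ε, m, hε, hfm⟩ := hf.exists_affine hfa hfb hab'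
  obtain ⟨σ, hσ, hσm⟩ := exists_mem_dih_isAffineOn hε m
  have hext : Extends σ f := fun x x' hx =>
    eq_of_mem_Icc_of_natCast_eq (hσm x (hf.1 x x' hx).1).1 (hf.1 x x' hx).2
      (by rw [(hσm x (hf.1 x x' hx).1).2, hfm x x' hx])
  refine ⟨σ, hσ, hext, fun τ hτ hτf => ?_⟩
  obtain ⟨η, m', hη, hτm⟩ := exists_isAffineOn_of_mem_dih hτ
  exact hτm.eqOn hσm hη hε (hf.1 a a' hfa).1 (hf.1 b b' hfb).1 hab'
    ((hτf a a' hfa).trans (hext a a' hfa).symm) ((hτf b b' hfb).trans (hext b b' hfb).symm)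
end

section
/- For n ≥ 3, the number of partial isometries of the cycle graph C_n equals n·2^{n+1} - n² - 2n + 1 if n is odd, and n·2^{n+1} - (3/2)n² - 2n + 1 if n is even; equivalently |DPC_n| = n·2^{n+1} - ((-1)^n + 5)/4 · n² - 2n + 1. -/
/-!
Identify `{1, …, n}` with `ZMod n`. The cycle distance of `x` and `y` is `x - y` up to sign, so a
partial isometry `f` satisfies `f x - f y = ±(x - y)` on its domain. Then every pair of points of
the domain agrees in `f x - x` or in `f x + x`, which forces one of the two to be constant: `f` is
the restriction of a rotation `z ↦ z + k` or of a reflection `z ↦ k - z`.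

So the partial isometries with domain `A` are the restrictions to `A` of the `2n` dihedral maps.
They are pairwise distinct when `A` is rigid, i.e. contains `x, y` with `2 (x - y) ≠ 0`. Otherwise
`A` is empty (one restriction), or a singleton or an antipodal pair, and then every reflection
agrees on `A` with a rotation (`n` restrictions). Summing over the `2^n` domains gives
`n 2^{n+1} - n M - n + 1`, where the number `M` of non-rigid domains is `n + 1` for odd `n` and
`3n/2 + 1` for even `n`.
-/

open Finset

theorem exists_forall_eq_or_exists_forall_eq {ι α β : Type*} [Nonempty α] {D : Set ι}
    {S : ι → α} {T : ι → β} (h : ∀ x ∈ D, ∀ y ∈ D, S x = S y ∨ T x = T y) :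
    (∃ s, ∀ x ∈ D, S x = s) ∨ ∃ t, ∀ x ∈ D, T x = t := by
  by_cases hS : ∃ s, ∀ x ∈ D, S x = s
  · exact .inl hS
  push Not at hS
  obtain ⟨a, ha, -⟩ := hS (Classical.arbitrary α)
  obtain ⟨b, hb, hba⟩ := hS (S a)
  -- every `x` differs in `S` from `a` or from `b`, hence agrees in `T` with one of them
  refine .inr ⟨T a, fun x hx => ?_⟩
  rcases h x hx a ha with hxa | hxa
  · rcases h x hx b hb with hxb | hxb
    · exact absurd (hxb.symm.trans hxa) hba
    · rw [hxb]
      exact (h b hb a ha).resolve_left hba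
  · exact hxa

theorem Finset.card_filter_card_le_one_powerset {α : Type*} [DecidableEq α] (s : Finset α) :
    (s.powerset.filter (·.card ≤ 1)).card = s.card + 1 := by
  have h : s.powerset.filter (·.card ≤ 1) = s.powersetCard 1 ∪ s.powersetCard 0 := by
    ext A
    simp only [mem_filter, mem_powerset, mem_union, mem_powersetCard, ← and_or_left]
    exact and_congr_right fun _ => by omega
  rw [h, card_union_of_disjoint, card_powersetCard, card_powersetCard, Nat.choose_one_right,
    Nat.choose_zero_right]
  refine disjoint_left.mpr fun A h1 h0 => ?_
  have := (mem_powersetCard.mp h1).2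
  have := (mem_powersetCard.mp h0).2
  omega

namespace CycleIsometry

variable {n : ℕ}

-- the representative of `z` in `{1, …, n}`, with `0` represented by `n`
def toIcc (z : ZMod n) : ℕ := (z - 1).val + 1

def dihedralApply : DihedralGroup n → ZMod n → ZMod n
  | .r i, z => z + i
  | .sr i, z => i - z

def dihedralOn (g : DihedralGroup n) (A : Finset ℕ) : ℕ → Option ℕ :=
  fun i => if i ∈ A then some (toIcc (dihedralApply g i)) else none

lemma toIcc_natCast {x : ℕ} (hx : x ∈ Icc 1 n) : toIcc (x : ZMod n) = x := by
  rw [mem_Icc] at hx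
  have h : (x : ZMod n) - 1 = ((x - 1 : ℕ) : ZMod n) := by rw [Nat.cast_sub hx.1, Nat.cast_one]
  rw [toIcc, h, ZMod.val_cast_of_lt (by omega)]
  omega

lemma natCast_injOn_Icc : Set.InjOn (Nat.cast : ℕ → ZMod n) (Icc 1 n) := fun x hx y hy h => by
  rw [← toIcc_natCast hx, ← toIcc_natCast hy, h]

lemma cdist_comm (x y : ℕ) : cdist n x y = cdist n y x := by
  unfold cdist
  omega

lemma dihedralApply_sub (g : DihedralGroup n) (x y : ZMod n) :
    dihedralApply g x - dihedralApply g y = x - y ∨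
      dihedralApply g x - dihedralApply g y = -(x - y) := by
  cases g with
  | r i => exact .inl (by simp only [dihedralApply]; ring)
  | sr i => exact .inr (by simp only [dihedralApply]; ring)

lemma dihedralOn_eq_some {g : DihedralGroup n} {A : Finset ℕ} {x y : ℕ}
    (h : dihedralOn g A x = some y) : x ∈ A ∧ y = toIcc (dihedralApply g x) := by
  unfold dihedralOn at h
  split_ifs at h with hx
  exact ⟨hx, (Option.some_inj.mp h).symm⟩

lemma domF_dihedralOn (g : DihedralGroup n) {A : Finset ℕ} (hA : A ⊆ Icc 1 n) :
    domF n (dihedralOn g A) = A := by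
  ext i
  by_cases hi : i ∈ A
  · simp [domF, dihedralOn, hi, hA hi]
  · simp [domF, dihedralOn, hi]

variable [NeZero n]

lemma toIcc_mem (z : ZMod n) : toIcc z ∈ Icc 1 n := by
  have := (z - 1).val_lt
  simp only [toIcc, mem_Icc]
  omega

@[simp]
lemma natCast_toIcc (z : ZMod n) : (toIcc z : ZMod n) = z := by
  simp [toIcc]

lemma toIcc_injective : Function.Injective (toIcc : ZMod n → ℕ) :=
  Function.LeftInverse.injective natCast_toIcc

lemma cdist_eq_natAbs_valMinAbs {x y : ℕ} (hx : x ∈ Icc 1 n) (hy : y ∈ Icc 1 n) :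
    cdist n x y = ((x : ZMod n) - y).valMinAbs.natAbs := by
  wlog hyx : y ≤ x generalizing x y
  · rw [cdist_comm, this hy hx (by omega), ← ZMod.natAbs_valMinAbs_neg, neg_sub]
  rw [mem_Icc] at hx hy
  rw [ZMod.valMinAbs_natAbs_eq_min, ← Nat.cast_sub hyx, ZMod.val_cast_of_lt (by omega), cdist]
  omega

lemma _root_.PIso.sub_eq_or_eq_neg {f : ℕ → Option ℕ} (hf : PIso n f) {x y x' y' : ℕ}
    (hx : f x = some x') (hy : f y = some y') :
    (x' : ZMod n) - y' = x - y ∨ (x' : ZMod n) - y' = -(x - y) := by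
  have h := hf.2.2 x y x' y' hx hy
  rwa [cdist_eq_natAbs_valMinAbs (hf.1 _ _ hx).2 (hf.1 _ _ hy).2,
    cdist_eq_natAbs_valMinAbs (hf.1 _ _ hx).1 (hf.1 _ _ hy).1,
    ZMod.natAbs_valMinAbs_eq_natAbs_valMinAbs] at h

lemma _root_.PIso.exists_dihedralApply {f : ℕ → Option ℕ} (hf : PIso n f) :
    ∃ g : DihedralGroup n, ∀ x x', f x = some x' → (x' : ZMod n) = dihedralApply g x := by
  have hpair : ∀ p ∈ {p : ℕ × ℕ | f p.1 = some p.2}, ∀ q ∈ {p : ℕ × ℕ | f p.1 = some p.2},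
      ((p.2 : ZMod n) - p.1 = q.2 - q.1) ∨ ((p.2 : ZMod n) + p.1 = q.2 + q.1) := by
    intro p hp q hq
    rcases hf.sub_eq_or_eq_neg hp hq with h | h
    · exact .inl (by linear_combination h)
    · exact .inr (by linear_combination h)
  rcases exists_forall_eq_or_exists_forall_eq hpair with ⟨k, hk⟩ | ⟨k, hk⟩
  · exact ⟨.r k, fun x x' h => by simp only [dihedralApply]; linear_combination hk (x, x') h⟩
  · exact ⟨.sr k, fun x x' h => by simp only [dihedralApply]; linear_combination hk (x, x') h⟩

lemma _root_.PIso.eq_dihedralOn {f : ℕ → Option ℕ} (hf : PIso n f) :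
    ∃ g : DihedralGroup n, f = dihedralOn g (domF n f) := by
  obtain ⟨g, hg⟩ := hf.exists_dihedralApply
  refine ⟨g, funext fun i => ?_⟩
  cases hfi : f i with
  | none => simp [dihedralOn, domF, hfi]
  | some y =>
    have hi : i ∈ domF n f := mem_filter.mpr ⟨(hf.1 i y hfi).1, by simp [hfi]⟩
    rw [dihedralOn, if_pos hi, ← hg i y hfi, toIcc_natCast (hf.1 i y hfi).2]

lemma piso_dihedralOn (g : DihedralGroup n) {A : Finset ℕ} (hA : A ⊆ Icc 1 n) :
    PIso n (dihedralOn g A) := by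
  refine ⟨fun x y h => ?_, fun x y z hx hy => ?_, fun x y x' y' hx hy => ?_⟩
  · obtain ⟨hxA, rfl⟩ := dihedralOn_eq_some h
    exact ⟨hA hxA, toIcc_mem _⟩
  · obtain ⟨hxA, rfl⟩ := dihedralOn_eq_some hx
    obtain ⟨hyA, hxy⟩ := dihedralOn_eq_some hy
    apply natCast_injOn_Icc (hA hxA) (hA hyA)
    have := sub_eq_zero.mpr (toIcc_injective hxy)
    rcases dihedralApply_sub g x y with h | h <;> rw [h] at this
    · exact sub_eq_zero.mp this
    · exact sub_eq_zero.mp (neg_eq_zero.mp this)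
  · obtain ⟨hxA, rfl⟩ := dihedralOn_eq_some hx
    obtain ⟨hyA, rfl⟩ := dihedralOn_eq_some hy
    rw [cdist_eq_natAbs_valMinAbs (toIcc_mem _) (toIcc_mem _),
      cdist_eq_natAbs_valMinAbs (hA hxA) (hA hyA), natCast_toIcc, natCast_toIcc,
      ZMod.natAbs_valMinAbs_eq_natAbs_valMinAbs]
    exact dihedralApply_sub g x y

theorem piso_iff {f : ℕ → Option ℕ} :
    PIso n f ↔ ∃ A ⊆ Icc 1 n, ∃ g : DihedralGroup n, f = dihedralOn g A := by
  refine ⟨fun hf => ⟨domF n f, filter_subset _ _, hf.eq_dihedralOn⟩, ?_⟩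
  rintro ⟨A, hA, g, rfl⟩
  exact piso_dihedralOn g hA

end CycleIsometry

namespace CycleIsometry

variable {n : ℕ}

def IsRigid (n : ℕ) (A : Finset ℕ) : Prop := ∃ x ∈ A, ∃ y ∈ A, 2 * ((x : ZMod n) - y) ≠ 0

instance : DecidablePred (IsRigid n) := fun A =>
  inferInstanceAs (Decidable (∃ x ∈ A, ∃ y ∈ A, 2 * ((x : ZMod n) - y) ≠ 0))

lemma two_mul_natCast_sub_eq_zero_iff {x y : ℕ} (hx : x ∈ Icc 1 n) (hy : y ∈ Icc 1 n) :
    2 * ((x : ZMod n) - y) = 0 ↔ x = y ∨ 2 * x + n = 2 * y ∨ 2 * y + n = 2 * x := by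
  rw [mem_Icc] at hx hy
  have hcast : 2 * ((x : ZMod n) - y) = ((2 * x - 2 * y : ℤ) : ZMod n) := by push_cast; ring
  rw [hcast, ZMod.intCast_zmod_eq_zero_iff_dvd]
  constructor
  · rintro ⟨c, hc⟩
    have hc2 : c < 2 := lt_of_mul_lt_mul_left (a := (n : ℤ)) (by omega) (by positivity)
    have hc2' : -2 < c := lt_of_mul_lt_mul_left (a := (n : ℤ)) (by omega) (by positivity)
    interval_cases c <;> omega
  · rintro (rfl | h | h)
    · exact ⟨0, by ring⟩
    · exact ⟨-1, by omega⟩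
    · exact ⟨1, by omega⟩

lemma not_isRigid_iff {A : Finset ℕ} (hA : A ⊆ Icc 1 n) :
    ¬IsRigid n A ↔ ∀ x ∈ A, ∀ y ∈ A, x = y ∨ 2 * x + n = 2 * y ∨ 2 * y + n = 2 * x := by
  simp only [IsRigid, not_exists, not_and, not_not]
  exact forall₂_congr fun x hx => forall₂_congr fun y hy =>
    two_mul_natCast_sub_eq_zero_iff (hA hx) (hA hy)

lemma not_isRigid_iff_of_odd (hn : Odd n) {A : Finset ℕ} (hA : A ⊆ Icc 1 n) :
    ¬IsRigid n A ↔ A.card ≤ 1 := by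
  obtain ⟨m, rfl⟩ := hn
  rw [not_isRigid_iff hA, card_le_one]
  exact forall₂_congr fun x _ => forall₂_congr fun y _ => by omega

lemma not_isRigid_iff_of_even (hn : Even n) {A : Finset ℕ} (hA : A ⊆ Icc 1 n) :
    ¬IsRigid n A ↔ A.card ≤ 1 ∨ A ∈ (Icc 1 (n / 2)).image fun x => {x, x + n / 2} := by
  obtain ⟨m, rfl⟩ := hn
  simp only [mem_image, eq_comm (b := A)]
  rw [not_isRigid_iff hA, card_le_one, show (m + m) / 2 = m by omega]
  constructor
  · intro h
    by_cases hall : ∀ x ∈ A, ∀ y ∈ A, x = y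
    · exact .inl hall
    push Not at hall
    obtain ⟨x, hx, y, hy, hxy⟩ := hall
    wlog hlt : x < y generalizing x y
    · exact this y hy x hx (Ne.symm hxy) (by omega)
    have hyx : y = x + m := by have := h x hx y hy; omega
    have hy_mem := mem_Icc.mp (hA hy)
    refine .inr ⟨x, mem_Icc.mpr ⟨(mem_Icc.mp (hA hx)).1, by omega⟩, ?_⟩
    ext z
    simp only [mem_insert, mem_singleton]
    refine ⟨fun hz => ?_, ?_⟩
    · have := h z hz x hx
      have := h z hz y hy
      omega
    · rintro (rfl | rfl)
      · exact hx
      · rwa [← hyx]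
  · rintro (h | ⟨x, -, rfl⟩)
    · exact fun x hx y hy => .inl (h x hx y hy)
    · simp only [mem_insert, mem_singleton]
      omega

lemma card_filter_not_isRigid_of_odd (hn : Odd n) :
    ((Icc 1 n).powerset.filter (¬IsRigid n ·)).card = n + 1 := by
  rw [filter_congr fun A hA => not_isRigid_iff_of_odd hn (mem_powerset.mp hA),
    card_filter_card_le_one_powerset, Nat.card_Icc, Nat.add_sub_cancel]

lemma dihedralOn_sr_eq_dihedralOn_r {A : Finset ℕ} (hA : ¬IsRigid n A) {x : ℕ} (hx : x ∈ A)
    (j : ZMod n) : dihedralOn (.sr j) A = dihedralOn (.r (j - 2 * (x : ZMod n))) A := by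
  simp only [IsRigid, not_exists, not_and, not_not] at hA
  funext i
  unfold dihedralOn
  split_ifs with hi
  · simp only [dihedralApply]
    congr 2
    linear_combination -hA i hi x hx
  · rfl

variable [NeZero n]

lemma card_filter_not_isRigid_of_even (hn : Even n) :
    ((Icc 1 n).powerset.filter (¬IsRigid n ·)).card = n + 1 + n / 2 := by
  have hn2 : 0 < n / 2 := by obtain ⟨m, rfl⟩ := hn; have := NeZero.ne (m + m); omega
  have hpairs : (Icc 1 (n / 2)).image (fun x => {x, x + n / 2}) ⊆ (Icc 1 n).powerset := by
    intro A hA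
    obtain ⟨x, hx, rfl⟩ := mem_image.mp hA
    rw [mem_Icc] at hx
    simp only [mem_powerset, insert_subset_iff, singleton_subset_iff, mem_Icc]
    omega
  have hinj : Set.InjOn (fun x => ({x, x + n / 2} : Finset ℕ)) (Icc 1 (n / 2)) := by
    intro x _ y _ h
    simp only at h
    have hx : x ∈ ({y, y + n / 2} : Finset ℕ) := h ▸ mem_insert_self x _
    have hy : y ∈ ({x, x + n / 2} : Finset ℕ) := h.symm ▸ mem_insert_self y _
    simp only [mem_insert, mem_singleton] at hx hy
    omega
  rw [filter_congr fun A hA => not_isRigid_iff_of_even hn (mem_powerset.mp hA), filter_or,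
    card_union_of_disjoint, card_filter_card_le_one_powerset, Nat.card_Icc, Nat.add_sub_cancel,
    filter_mem_eq_inter, inter_eq_right.mpr hpairs, card_image_of_injOn hinj, Nat.card_Icc,
    Nat.add_sub_cancel]
  refine disjoint_filter.mpr fun A _ hA hpair => ?_
  obtain ⟨x, -, rfl⟩ := mem_image.mp hpair
  rw [card_pair (by omega)] at hA
  omega

open Classical in
noncomputable def isometriesOn (n : ℕ) [NeZero n] (A : Finset ℕ) : Finset (ℕ → Option ℕ) :=
  (univ : Finset (DihedralGroup n)).image (dihedralOn · A)

open Classical in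
lemma setOf_piso_eq_biUnion :
    {f | PIso n f} = ↑((Icc 1 n).powerset.biUnion (isometriesOn n)) := by
  ext f
  simp only [Set.mem_ofPred_eq, piso_iff, mem_coe, mem_biUnion, mem_powerset, isometriesOn,
    mem_image, mem_univ, true_and, eq_comm]

lemma ncard_setOf_piso_eq_sum :
    {f | PIso n f}.ncard = ∑ A ∈ (Icc 1 n).powerset, (isometriesOn n A).card := by
  classical
  rw [setOf_piso_eq_biUnion, Set.ncard_coe_finset, card_biUnion]
  intro A hA B hB hAB
  refine disjoint_left.mpr fun f hfA hfB => hAB ?_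
  simp only [isometriesOn, mem_image, mem_univ, true_and] at hfA hfB
  obtain ⟨g, rfl⟩ := hfA
  obtain ⟨g', hg'⟩ := hfB
  rw [← domF_dihedralOn g (mem_powerset.mp hA), ← hg', domF_dihedralOn g' (mem_powerset.mp hB)]

lemma card_isometriesOn_empty : (isometriesOn n ∅).card = 1 := by
  classical
  have : ∀ g : DihedralGroup n, dihedralOn g ∅ = fun _ => none := fun g => by
    funext i
    simp [dihedralOn]
  simp [isometriesOn, this, image_const univ_nonempty]

lemma card_isometriesOn_of_isRigid {A : Finset ℕ} (hA : IsRigid n A) :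
    (isometriesOn n A).card = 2 * n := by
  classical
  obtain ⟨x, hx, y, hy, hxy⟩ := hA
  rw [isometriesOn, card_image_of_injective _ ?_, card_univ, DihedralGroup.card]
  intro g g' h
  have hval : ∀ i ∈ A, dihedralApply g i = dihedralApply g' i := fun i hi => by
    have := congrFun h i
    simp only [dihedralOn, if_pos hi, Option.some_inj] at this
    exact toIcc_injective this
  have ex := hval x hx
  have ey := hval y hy
  cases g <;> cases g' <;> simp only [dihedralApply, DihedralGroup.r.injEq,
    DihedralGroup.sr.injEq, reduceCtorEq] at ex ey ⊢
  · linear_combination ex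
  · exact hxy (by linear_combination ex - ey)
  · exact hxy (by linear_combination ey - ex)
  · linear_combination ex

lemma card_isometriesOn_of_not_isRigid {A : Finset ℕ} (hne : A.Nonempty) (hA : ¬IsRigid n A) :
    (isometriesOn n A).card = n := by
  classical
  obtain ⟨x, hx⟩ := hne
  have himage : isometriesOn n A = univ.image fun k : ZMod n => dihedralOn (.r k) A := by
    ext f
    simp only [isometriesOn, mem_image, mem_univ, true_and]
    constructor
    · rintro ⟨g, rfl⟩
      cases g with
      | r k => exact ⟨k, rfl⟩
      | sr j => exact ⟨j - 2 * (x : ZMod n), (dihedralOn_sr_eq_dihedralOn_r hA hx j).symm⟩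
    · rintro ⟨k, rfl⟩
      exact ⟨.r k, rfl⟩
  rw [himage, card_image_of_injective _ ?_, card_univ, ZMod.card]
  intro k k' h
  have := congrFun h x
  simp only [dihedralOn, if_pos hx, Option.some_inj, dihedralApply] at this
  exact add_left_cancel (toIcc_injective this)

theorem ncard_setOf_piso :
    ({f | PIso n f}.ncard : ℤ) =
      n * 2 ^ (n + 1) - n * ((Icc 1 n).powerset.filter (¬IsRigid n ·)).card - n + 1 := by
  set P := (Icc 1 n).powerset
  set M := (P.filter (¬IsRigid n ·)).card
  have hR : (P.filter (IsRigid n ·)).card + M = 2 ^ n := by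
    rw [card_filter_add_card_filter_not, card_powerset, Nat.card_Icc, Nat.add_sub_cancel]
  have hempty : ∅ ∈ P.filter (¬IsRigid n ·) :=
    mem_filter.mpr ⟨empty_mem_powerset _, by simp [IsRigid]⟩
  have hsum : ∑ A ∈ P, (isometriesOn n A).card =
      (P.filter (IsRigid n ·)).card * (2 * n) + (1 + (M - 1) * n) := by
    rw [← sum_filter_add_sum_filter_not P (IsRigid n ·), ← add_sum_erase _ _ hempty,
      card_isometriesOn_empty,
      sum_congr rfl fun A hA => card_isometriesOn_of_isRigid (mem_filter.mp hA).2,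
      sum_congr rfl fun A hA => card_isometriesOn_of_not_isRigid
        (nonempty_iff_ne_empty.mpr (ne_of_mem_erase hA)) (mem_filter.mp (mem_of_mem_erase hA)).2,
      sum_const, sum_const, card_erase_of_mem hempty, smul_eq_mul, smul_eq_mul]
  have hM : 1 ≤ M := card_pos.mpr ⟨_, hempty⟩
  have hR' : ((P.filter (IsRigid n ·)).card : ℤ) = 2 ^ n - M := by
    rw [eq_sub_iff_add_eq]
    exact_mod_cast hR
  rw [ncard_setOf_piso_eq_sum, hsum]
  push_cast [hM, hR']
  ring

end CycleIsometry

/-- `|DPC_n| = n·2^{n+1} - n² - 2n + 1` for odd `n`, and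
`n·2^{n+1} - (3/2)n² - 2n + 1` for even `n`. -/
theorem stmt_11 (n : ℕ) (hn : 3 ≤ n) :
    (Odd n → (Set.ncard {f : ℕ → Option ℕ | PIso n f} : ℤ) =
      n * 2 ^ (n + 1) - n ^ 2 - 2 * n + 1) ∧
    (Even n → 2 * (Set.ncard {f : ℕ → Option ℕ | PIso n f} : ℤ) =
      n * 2 ^ (n + 2) - 3 * n ^ 2 - 4 * n + 2) := by
  have : NeZero n := ⟨by omega⟩
  rw [CycleIsometry.ncard_setOf_piso]
  refine ⟨fun hodd => ?_, fun heven => ?_⟩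
  · rw [CycleIsometry.card_filter_not_isRigid_of_odd hodd]
    push_cast
    ring
  · rw [CycleIsometry.card_filter_not_isRigid_of_even heven]
    obtain ⟨m, rfl⟩ := heven
    rw [show (m + m) / 2 = m by omega]
    push_cast
    ring
end

section
/- For n ≥ 3, two partial isometries α, β of C_n are H-related in DPC_n (equivalently, in the symmetric inverse monoid I_n restricted to DPC_n) if and only if Dom(α) = Dom(β) and Im(α) = Im(β); α and β are L-related iff Im(α) = Im(β), and R-related iff Dom(α) = Dom(β). -/
/-! In an inverse semigroup of partial injections (composed left to right),
`α = (α α⁻¹) α = α (α⁻¹ α)`, so `α` lies in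
its own principal left and right ideals; and any `γ` with `Im γ ⊆ Im β` (resp.
`Dom γ ⊆ Dom β`) factors as `(γ β⁻¹) β` (resp. `β (β⁻¹ γ)`). Hence the principal left ideal
of `α` is determined by `Im α` and the principal right ideal by `Dom α`. Nothing about the
cycle metric is needed beyond the fact that partial isometries are closed under composition
and inversion. -/

def PInj (f : ℕ → Option ℕ) : Prop := ∀ x y z, f x = some z → f y = some z → x = y

open Classical in
noncomputable def pinv (f : ℕ → Option ℕ) : ℕ → Option ℕ :=
  fun y => if h : ∃ x, f x = some y then some h.choose else none

lemma apply_eq_some_of_pinv_eq_some {f : ℕ → Option ℕ} {x y : ℕ} (h : pinv f y = some x) :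
    f x = some y := by
  unfold pinv at h
  split at h
  · next hex => cases h; exact hex.choose_spec
  · cases h

lemma pinv_eq_some_of_apply_eq_some {f : ℕ → Option ℕ} (hf : PInj f) {x y : ℕ}
    (h : f x = some y) : pinv f y = some x := by
  have hex : ∃ x, f x = some y := ⟨x, h⟩
  rw [pinv, dif_pos hex, hf _ _ _ hex.choose_spec h]

lemma pcomp_assoc (f g h : ℕ → Option ℕ) : pcomp (pcomp f g) h = pcomp f (pcomp g h) := by
  funext x
  exact Option.bind_assoc (f x) g h

lemma imS_pcomp_subset (f g : ℕ → Option ℕ) : ImS (pcomp f g) ⊆ ImS g := by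
  rintro z ⟨x, hx⟩
  obtain ⟨y, -, hy⟩ := Option.bind_eq_some_iff.mp hx
  exact ⟨y, hy⟩

lemma domS_pcomp_subset (f g : ℕ → Option ℕ) : DomS (pcomp f g) ⊆ DomS f := by
  intro x hx
  cases h : f x <;> simp_all [DomS, pcomp]

lemma pcomp_pinv_pcomp_eq_of_imS_subset {f g : ℕ → Option ℕ} (hf : PInj f)
    (hg : ImS g ⊆ ImS f) : pcomp (pcomp g (pinv f)) f = g := by
  funext x
  rw [pcomp_assoc]
  change (g x).bind (fun y => (pinv f y).bind f) = g x
  cases h : g x with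
  | none => rfl
  | some y =>
    obtain ⟨x', hx'⟩ := hg ⟨x, h⟩
    simp only [Option.bind_some, pinv_eq_some_of_apply_eq_some hf hx', hx']

lemma pcomp_pinv_pcomp_eq_of_domS_subset {f g : ℕ → Option ℕ} (hf : PInj f)
    (hg : DomS g ⊆ DomS f) : pcomp f (pcomp (pinv f) g) = g := by
  funext x
  rw [← pcomp_assoc]
  change ((f x).bind (pinv f)).bind g = g x
  cases h : f x with
  | none =>
    have hgx : g x = none := by
      by_contra hx
      simpa [DomS, h] using hg (Option.ne_none_iff_isSome.mp hx)
    simp [hgx]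
  | some y => simp only [Option.bind_some, pinv_eq_some_of_apply_eq_some hf h]

structure IsInverseSubsemigroup (M : (ℕ → Option ℕ) → Prop) : Prop where
  pInj : ∀ f, M f → PInj f
  pcomp_mem : ∀ f g, M f → M g → M (pcomp f g)
  pinv_mem : ∀ f, M f → M (pinv f)

def principalLeftIdeal (M : (ℕ → Option ℕ) → Prop) (a : ℕ → Option ℕ) : Set (ℕ → Option ℕ) :=
  {x | ∃ c, M c ∧ pcomp c a = x}

def principalRightIdeal (M : (ℕ → Option ℕ) → Prop) (a : ℕ → Option ℕ) : Set (ℕ → Option ℕ) :=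
  {x | ∃ c, M c ∧ pcomp a c = x}

namespace IsInverseSubsemigroup

variable {M : (ℕ → Option ℕ) → Prop} {a b : ℕ → Option ℕ}

lemma principalLeftIdeal_subset_iff (hM : IsInverseSubsemigroup M) (ha : M a) (hb : M b) :
    principalLeftIdeal M a ⊆ principalLeftIdeal M b ↔ ImS a ⊆ ImS b := by
  constructor
  · intro hsub
    obtain ⟨c, -, rfl⟩ := hsub ⟨pcomp a (pinv a), hM.pcomp_mem _ _ ha (hM.pinv_mem _ ha),
      pcomp_pinv_pcomp_eq_of_imS_subset (hM.pInj _ ha) le_rfl⟩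
    exact imS_pcomp_subset c b
  · rintro him _ ⟨c, hc, rfl⟩
    exact ⟨pcomp (pcomp c a) (pinv b),
      hM.pcomp_mem _ _ (hM.pcomp_mem _ _ hc ha) (hM.pinv_mem _ hb),
      pcomp_pinv_pcomp_eq_of_imS_subset (hM.pInj _ hb) ((imS_pcomp_subset c a).trans him)⟩

lemma principalRightIdeal_subset_iff (hM : IsInverseSubsemigroup M) (ha : M a) (hb : M b) :
    principalRightIdeal M a ⊆ principalRightIdeal M b ↔ DomS a ⊆ DomS b := by
  constructor
  · intro hsub
    obtain ⟨c, -, rfl⟩ := hsub ⟨pcomp (pinv a) a, hM.pcomp_mem _ _ (hM.pinv_mem _ ha) ha,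
      pcomp_pinv_pcomp_eq_of_domS_subset (hM.pInj _ ha) le_rfl⟩
    exact domS_pcomp_subset b c
  · rintro hdom _ ⟨c, hc, rfl⟩
    exact ⟨pcomp (pinv b) (pcomp a c),
      hM.pcomp_mem _ _ (hM.pinv_mem _ hb) (hM.pcomp_mem _ _ ha hc),
      pcomp_pinv_pcomp_eq_of_domS_subset (hM.pInj _ hb) ((domS_pcomp_subset a c).trans hdom)⟩

lemma principalLeftIdeal_eq_iff (hM : IsInverseSubsemigroup M) (ha : M a) (hb : M b) :
    principalLeftIdeal M a = principalLeftIdeal M b ↔ ImS a = ImS b := by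
  simp only [subset_antisymm_iff, hM.principalLeftIdeal_subset_iff ha hb,
    hM.principalLeftIdeal_subset_iff hb ha]

lemma principalRightIdeal_eq_iff (hM : IsInverseSubsemigroup M) (ha : M a) (hb : M b) :
    principalRightIdeal M a = principalRightIdeal M b ↔ DomS a = DomS b := by
  simp only [subset_antisymm_iff, hM.principalRightIdeal_subset_iff ha hb,
    hM.principalRightIdeal_subset_iff hb ha]

end IsInverseSubsemigroup

lemma isInverseSubsemigroup_PIso (n : ℕ) : IsInverseSubsemigroup (PIso n) where
  pInj _ hf := hf.2.1
  pcomp_mem f g := by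
    rintro ⟨f_maps, f_inj, f_isom⟩ ⟨g_maps, g_inj, g_isom⟩
    refine ⟨fun x z h => ?_, fun x x' z hx hx' => ?_, fun x x' z z' hx hx' => ?_⟩
    · obtain ⟨y, hy, hz⟩ := Option.bind_eq_some_iff.mp h
      exact ⟨(f_maps _ _ hy).1, (g_maps _ _ hz).2⟩
    · obtain ⟨y, hy, hz⟩ := Option.bind_eq_some_iff.mp hx
      obtain ⟨y', hy', hz'⟩ := Option.bind_eq_some_iff.mp hx'
      obtain rfl := g_inj _ _ _ hz hz'
      exact f_inj _ _ _ hy hy'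
    · obtain ⟨y, hy, hz⟩ := Option.bind_eq_some_iff.mp hx
      obtain ⟨y', hy', hz'⟩ := Option.bind_eq_some_iff.mp hx'
      rw [g_isom _ _ _ _ hz hz', f_isom _ _ _ _ hy hy']
  pinv_mem f := by
    rintro ⟨f_maps, f_inj, f_isom⟩
    refine ⟨fun y x h => ?_, fun y y' x hy hy' => ?_, fun y y' x x' hy hy' => ?_⟩
    · exact (f_maps _ _ (apply_eq_some_of_pinv_eq_some h)).symm
    · exact Option.some_injective _ <|
        (apply_eq_some_of_pinv_eq_some hy).symm.trans (apply_eq_some_of_pinv_eq_some hy')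
    · exact (f_isom _ _ _ _ (apply_eq_some_of_pinv_eq_some hy)
        (apply_eq_some_of_pinv_eq_some hy')).symm

theorem stmt_18_general (n : ℕ) (a b : ℕ → Option ℕ)
    (ha : PIso n a) (hb : PIso n b) :
    ({x | ∃ c, PIso n c ∧ pcomp c a = x} = {x | ∃ c, PIso n c ∧ pcomp c b = x} ↔
      ImS a = ImS b) ∧
    ({x | ∃ c, PIso n c ∧ pcomp a c = x} = {x | ∃ c, PIso n c ∧ pcomp b c = x} ↔
      DomS a = DomS b) ∧
    (({x | ∃ c, PIso n c ∧ pcomp c a = x} = {x | ∃ c, PIso n c ∧ pcomp c b = x} ∧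
      {x | ∃ c, PIso n c ∧ pcomp a c = x} = {x | ∃ c, PIso n c ∧ pcomp b c = x}) ↔
      (DomS a = DomS b ∧ ImS a = ImS b)) := by
  have hL := (isInverseSubsemigroup_PIso n).principalLeftIdeal_eq_iff ha hb
  have hR := (isInverseSubsemigroup_PIso n).principalRightIdeal_eq_iff ha hb
  unfold principalLeftIdeal at hL
  unfold principalRightIdeal at hR
  exact ⟨hL, hR, by rw [hL, hR, and_comm]⟩

/-- in `DPC_n`, `α L β` (equal principal left ideals) iff
`Im α = Im β`, `α R β` iff `Dom α = Dom β`, and `α H β` iff both. -/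
theorem stmt_18 (n : ℕ) (hn : 3 ≤ n) (a b : ℕ → Option ℕ)
    (ha : PIso n a) (hb : PIso n b) :
    ({x | ∃ c, PIso n c ∧ pcomp c a = x} = {x | ∃ c, PIso n c ∧ pcomp c b = x} ↔
      ImS a = ImS b) ∧
    ({x | ∃ c, PIso n c ∧ pcomp a c = x} = {x | ∃ c, PIso n c ∧ pcomp b c = x} ↔
      DomS a = DomS b) ∧
    (({x | ∃ c, PIso n c ∧ pcomp c a = x} = {x | ∃ c, PIso n c ∧ pcomp c b = x} ∧
      {x | ∃ c, PIso n c ∧ pcomp a c = x} = {x | ∃ c, PIso n c ∧ pcomp b c = x}) ↔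
      (DomS a = DomS b ∧ ImS a = ImS b)) :=
  stmt_18_general n a b ha hb
end
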